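/- arXiv:0809.3546 — 3 statements merged into one kernel-verified Lean document; each statement's English description precedes it below -/
import Mathlib

section
/- Let q be a prime power and L a field extension of Fq of degree m with m ≥ n. Let k, μ, t, ρ be nonnegative integers with k ≥ 1 and k ≤ n − 2t − ρ − μ. Let G ∈ L^{(k+μ)×n} have rank k + μ, suppose the code C = {G^T u : u ∈ L^{k+μ}} has minimum rank distance n − (k+μ) + 1, and suppose the code generated by the last μ rows G₂ of G, namely {G₂^T v : v ∈ L^{μ}}, has minimum rank distance n − μ + 1 (both MRD). Let S be a random variable with values in L^k, let V be uniformly distributed on L^{μ} and independent of S, let U = (S; V) ∈ L^{k+μ} (stacked column vector), and let X = G^T U. Identify L^n with Fq^{n×m} via a fixed Fq-basis of L. Then: (a) for all distinct u₁, u₂ ∈ L^{k+μ}, the fan-out sets Y^{ρ,t}_{G^T u₁} and Y^{ρ,t}_{G^T u₂} (of the corresponding matrices in Fq^{n×m}) are disjoint; and (b) for every matrix B ∈ Fq^{μ×n} (acting on L^n via the embedding Fq ⊆ L), I(S; BX) = 0. -/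
set_option autoImplicit false

open Matrix MeasureTheory

/-- Shannon entropy (in nats) of a finitely-valued random variable. -/
noncomputable def entropy {Ω α : Type*} [Fintype α] [MeasurableSpace Ω]
    (P : Measure Ω) (X : Ω → α) : ℝ :=
  - ∑ a : α, (P {ω | X ω = a}).toReal * Real.log (P {ω | X ω = a}).toReal

/-- Mutual information (in nats) `I(X;Y) = H(X) + H(Y) - H(X,Y)`. -/
noncomputable def mutualInfo {Ω α β : Type*} [Fintype α] [Fintype β] [MeasurableSpace Ω]
    (P : Measure Ω) (X : Ω → α) (Y : Ω → β) : ℝ :=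
  entropy P X + entropy P Y - entropy P (fun ω => (X ω, Y ω))

/-- The rank weight of `x ∈ L^n`: the dimension over `F` of the `F`-span of its coordinates. -/
noncomputable def rankWeight (F : Type*) {L : Type*} [Field F] [Field L] [Algebra F L]
    {n : ℕ} (x : Fin n → L) : ℕ :=
  Module.finrank F (Submodule.span F (Set.range x))

/-- The minimum rank distance of a code `C ⊆ L^n` equals `d`. -/
def minRankDistEq (F : Type*) {L : Type*} [Field F] [Field L] [Algebra F L]
    {n : ℕ} (C : Set (Fin n → L)) (d : ℕ) : Prop :=
  IsLeast {e | ∃ x ∈ C, ∃ y ∈ C, x ≠ y ∧ rankWeight F (x - y) = e} d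

/-- The fan-out set `Y^{ρ,t}_x`. -/
def fanOut {F : Type*} [Field F] [Fintype F] {n m : ℕ} (ρ t : ℕ)
    (x : Matrix (Fin n) (Fin m) F) :
    Set (Matrix (Fin n) (Fin n) F × Matrix (Fin n) (Fin m) F) :=
  {p | n - ρ ≤ p.1.rank ∧ ∃ Z : Matrix (Fin n) (Fin m) F, Z.rank ≤ t ∧ p.2 = p.1 * x + Z}

/-- The identification of `L^n` with `F^{n×m}` via a fixed `F`-basis `b` of `L`. -/
noncomputable def toMat {F L : Type*} [Field F] [Field L] [Algebra F L] {n m : ℕ}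
    (b : Module.Basis (Fin m) F L) (x : Fin n → L) : Matrix (Fin n) (Fin m) F :=
  fun i j => b.repr (x i) j

/-- The last `μ` rows of `G ∈ L^{(k+μ)×n}`. -/
def lastRowsOfG {L : Type*} {k μ n : ℕ} (G : Matrix (Fin (k + μ)) (Fin n) L) :
    Matrix (Fin μ) (Fin n) L :=
  G.submatrix (fun i : Fin μ => (⟨k + (i : ℕ), by have := i.isLt; omega⟩ : Fin (k + μ))) id

/-!
(a) Distinct codewords `x₁, x₂` of an MRD code of dimension `k + μ` satisfy
`rank (x₁ - x₂) ≥ n - k - μ + 1 > 2t + ρ`. A common point `(A, y)` of their fan-out sets gives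
`A (x₁ - x₂) = Z₂ - Z₁` of rank at most `2t`, while Sylvester's inequality gives
`rank (x₁ - x₂) ≤ rank (A (x₁ - x₂)) + ρ`.

(b) Write `B = T C` with `C ∈ F^{μ×n}` of rank `μ`. A nonzero codeword of the MRD code generated
by `G₂` has rank weight at least `n - μ + 1`, too large to be killed by `C`, so the square matrix
`C G₂ᵀ` is invertible. Hence for each message `s` the observation `C X = C G₁ᵀ s + C G₂ᵀ V` is uniform,
so `C X`, and with it `B X = T (C X)`, is independent of `S`.
-/

namespace Submodule

variable {K V : Type*} [Field K] [AddCommGroup V] [Module K V] [Module.Finite K V]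

theorem exists_le_finrank_eq (W : Submodule K V) {d : ℕ} (hWd : Module.finrank K W ≤ d)
    (hd : d ≤ Module.finrank K V) : ∃ W' : Submodule K V, W ≤ W' ∧ Module.finrank K W' = d := by
  induction d, hWd using Nat.le_induction with
  | base => exact ⟨W, le_rfl, rfl⟩
  | succ d _ ih =>
    obtain ⟨W', hWW', hW'⟩ := ih (by omega)
    obtain ⟨x, hx⟩ := W'.exists_of_finrank_lt (by omega)
    refine ⟨W' ⊔ K ∙ x, hWW'.trans le_sup_left, ?_⟩
    rw [finrank_sup_span_singleton (by simpa using hx 1 one_ne_zero), hW']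

end Submodule

namespace Matrix

variable {K : Type*} [Field K] {l m n : Type*} [Fintype n]

theorem rank_sub_le [Finite m] (A B : Matrix m n K) : (A - B).rank ≤ A.rank + B.rank := by
  have hrange : LinearMap.range (A - B).mulVecLin ≤
      LinearMap.range A.mulVecLin ⊔ LinearMap.range B.mulVecLin := by
    rintro _ ⟨v, rfl⟩
    rw [mulVecLin_apply, sub_mulVec]
    exact Submodule.sub_mem_sup (LinearMap.mem_range_self _ v) (LinearMap.mem_range_self _ v)
  exact (Submodule.finrank_mono hrange).trans (Submodule.finrank_add_le_finrank_add_finrank _ _)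

theorem rank_le_rank_mul_add [Finite l] [Fintype m] (A : Matrix l n K) (M : Matrix n m K) :
    M.rank ≤ (A * M).rank + (Fintype.card n - A.rank) := by
  set W := LinearMap.range M.mulVecLin
  set f := A.mulVecLin.domRestrict W
  have hrange : LinearMap.range f = LinearMap.range (A * M).mulVecLin := by
    rw [LinearMap.range_domRestrict, mulVecLin_mul, LinearMap.range_comp]
  have hnullity : A.rank + Module.finrank K (LinearMap.ker A.mulVecLin) = Fintype.card n := by
    rw [← Module.finrank_fintype_fun_eq_card (R := K)]
    exact A.mulVecLin.finrank_range_add_finrank_ker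
  have hker :
      Module.finrank K (LinearMap.ker f) ≤ Module.finrank K (LinearMap.ker A.mulVecLin) := by
    rw [← Submodule.finrank_map_subtype_eq, LinearMap.ker_domRestrict]
    exact Submodule.finrank_mono (Submodule.map_comap_le _ _)
  have hf : (A * M).rank + Module.finrank K (LinearMap.ker f) = M.rank := by
    rw [rank, ← hrange]; exact f.finrank_range_add_finrank_ker
  omega

theorem injective_mulVec_of_rank_eq_card [Finite m] (A : Matrix m n K)
    (hA : A.rank = Fintype.card n) : Function.Injective A.mulVec := by
  have hnullity := A.mulVecLin.finrank_range_add_finrank_ker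
  rw [Module.finrank_fintype_fun_eq_card] at hnullity
  have hker : LinearMap.ker A.mulVecLin = ⊥ :=
    Submodule.finrank_eq_zero.mp (by rw [rank] at hA; omega)
  exact LinearMap.ker_eq_bot.mp hker

theorem exists_rank_eq_card_and_eq_mul [Fintype m] (B : Matrix m n K)
    (hmn : Fintype.card m ≤ Fintype.card n) :
    ∃ (C : Matrix m n K) (T : Matrix m m K), C.rank = Fintype.card m ∧ B = T * C := by
  obtain ⟨W, hBW, hW⟩ := (Submodule.span K (Set.range B.row)).exists_le_finrank_eq
    (d := Fintype.card m) (by rw [← rank_eq_finrank_span_row]; exact B.rank_le_card_height)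
    (by rwa [Module.finrank_fintype_fun_eq_card])
  let basis : Module.Basis m K W :=
    (Module.finBasisOfFinrankEq K W hW).reindex (Fintype.equivFin m).symm
  let C : Matrix m n K := Matrix.of fun i => (basis i : n → K)
  have hC : LinearIndependent K C :=
    basis.linearIndependent.map' W.subtype (Submodule.ker_subtype W)
  have hspan : Submodule.span K (Set.range C) = W := by
    rw [show Set.range C = W.subtype '' Set.range basis by rw [← Set.range_comp]; rfl,
      ← Submodule.map_span, basis.span_eq, Submodule.map_top, Submodule.range_subtype]
  have hrow : ∀ i, B i ∈ Submodule.span K (Set.range C) :=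
    fun i => hspan ▸ hBW (Submodule.subset_span (Set.mem_range_self (f := B.row) i))
  choose T hT using fun i => (Submodule.mem_span_range_iff_exists_fun K).mp (hrow i)
  refine ⟨C, Matrix.of T, by rw [hC.rank_matrix], ?_⟩
  ext i j
  simpa [mul_apply, Finset.sum_apply] using (congrFun (hT i) j).symm

end Matrix

section RankMetric

variable {F L : Type*} [Field F] [Field L] [Algebra F L] {n m : ℕ}

theorem rank_toMat (b : Module.Basis (Fin m) F L) (x : Fin n → L) :
    (toMat b x).rank = rankWeight F x := by
  rw [rank_eq_finrank_span_row, rankWeight,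
    show Set.range (toMat b x).row = b.equivFun '' Set.range x by rw [← Set.range_comp]; rfl,
    Submodule.span_image_linearEquiv]
  exact b.equivFun.finrank_map_eq _

theorem toMat_sub (b : Module.Basis (Fin m) F L) (x y : Fin n → L) :
    toMat b (x - y) = toMat b x - toMat b y := by
  ext i j; simp [toMat]

theorem toMat_map_mulVec {l : ℕ} (b : Module.Basis (Fin m) F L)
    (B : Matrix (Fin l) (Fin n) F) (x : Fin n → L) :
    toMat b (B.map (algebraMap F L) *ᵥ x) = B * toMat b x := by
  ext i j
  simp [toMat, mulVec, dotProduct, mul_apply, ← Algebra.smul_def, Finsupp.finsetSum_apply]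

theorem rank_add_rankWeight_le_of_map_mulVec_eq_zero [Module.Finite F L] {l : ℕ}
    (B : Matrix (Fin l) (Fin n) F) (x : Fin n → L) (hBx : B.map (algebraMap F L) *ᵥ x = 0) :
    B.rank + rankWeight F x ≤ n := by
  let b := Module.finBasis F L
  have hB : B * toMat b x = 0 := by
    rw [← toMat_map_mulVec, hBx]; ext; simp [toMat]
  simpa [rank_toMat] using rank_add_rank_le_card_of_mul_eq_zero hB

theorem minRankDistEq.le_rankWeight_sub {C : Set (Fin n → L)} {d : ℕ}
    (hC : minRankDistEq F C d) {x y : Fin n → L} (hx : x ∈ C) (hy : y ∈ C) (hxy : x ≠ y) :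
    d ≤ rankWeight F (x - y) :=
  hC.2 ⟨x, hx, y, hy, hxy, rfl⟩

end RankMetric

theorem fanOut_inter_eq_empty_of_lt_rank_sub {F : Type*} [Field F] [Fintype F] {n m ρ t : ℕ}
    {x₁ x₂ : Matrix (Fin n) (Fin m) F} (hx : 2 * t + ρ < (x₁ - x₂).rank) :
    fanOut ρ t x₁ ∩ fanOut ρ t x₂ = ∅ := by
  refine Set.eq_empty_of_forall_notMem ?_
  rintro ⟨A, y⟩ ⟨⟨hA, Z₁, hZ₁, hy₁⟩, -, Z₂, hZ₂, hy₂⟩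
  dsimp only at hA hy₁ hy₂
  have hAx : A * (x₁ - x₂) = Z₂ - Z₁ := by
    rw [Matrix.mul_sub, sub_eq_sub_iff_add_eq_add, ← hy₁, hy₂, add_comm]
  have hsylvester := A.rank_le_rank_mul_add (x₁ - x₂)
  have hsub := Z₂.rank_sub_le Z₁
  rw [hAx, Fintype.card_fin] at hsylvester
  omega

section Probability

variable {Ω α β γ : Type*} [MeasurableSpace Ω] {P : Measure Ω}

/-- Independence of finitely-valued random variables, stated on fibres so that the value types
need no measurable structure. -/
def IndepValues (P : Measure Ω) (X : Ω → α) (Y : Ω → β) : Prop :=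
  ∀ a b, P {ω | X ω = a ∧ Y ω = b} = P {ω | X ω = a} * P {ω | Y ω = b}

theorem entropy_eq_sum_negMulLog {δ : Type*} [Fintype δ] (P : Measure Ω) (Z : Ω → δ) :
    entropy P Z = ∑ d, Real.negMulLog (P {ω | Z ω = d}).toReal := by
  simp [entropy, Real.negMulLog, Finset.sum_neg_distrib]

variable [Finite Ω] [MeasurableSingletonClass Ω]

theorem measure_eq_sum_measure_inter_fiber [Fintype β] (P : Measure Ω) (Y : Ω → β) (E : Set Ω) :
    P E = ∑ b, P (E ∩ {ω | Y ω = b}) := by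
  classical
  rw [← measure_biUnion_finset (fun b _ b' _ hbb' => ?_)
    (fun b _ => (Set.toFinite _).measurableSet)]
  · congr 1; ext ω; simp
  · exact Set.disjoint_left.mpr fun ω h h' => hbb' (h.2.symm.trans h'.2)

theorem sum_measure_fiber_eq_one [IsProbabilityMeasure P] [Fintype α] (X : Ω → α) :
    ∑ a, P {ω | X ω = a} = 1 := by
  simpa using (measure_eq_sum_measure_inter_fiber P X Set.univ).symm

theorem sum_measure_fiber_toReal_eq_one [IsProbabilityMeasure P] [Fintype α] (X : Ω → α) :
    ∑ a, (P {ω | X ω = a}).toReal = 1 := by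
  rw [← ENNReal.toReal_sum fun a _ => measure_ne_top P _, sum_measure_fiber_eq_one,
    ENNReal.toReal_one]

theorem IndepValues.comp_right [Fintype β] {X : Ω → α} {Y : Ω → β} (h : IndepValues P X Y)
    (f : β → γ) :
    IndepValues P X (fun ω => f (Y ω)) := by
  classical
  have hfiber : ∀ E c, P (E ∩ {ω | f (Y ω) = c}) =
      ∑ b ∈ Finset.univ.filter (f · = c), P (E ∩ {ω | Y ω = b}) := by
    intro E c
    rw [measure_eq_sum_measure_inter_fiber P Y, Finset.sum_filter]
    refine Finset.sum_congr rfl fun b _ => ?_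
    split_ifs with hb
    · congr 1; ext ω; simp +contextual [hb]
    · exact measure_mono_null (fun ω hω => hb (hω.2 ▸ hω.1.2)) measure_empty
  intro a c
  calc P {ω | X ω = a ∧ f (Y ω) = c}
      = ∑ b ∈ Finset.univ.filter (f · = c), P {ω | X ω = a ∧ Y ω = b} := hfiber {ω | X ω = a} c
    _ = P {ω | X ω = a} * P {ω | f (Y ω) = c} := by
      simp_rw [h a, ← Finset.mul_sum]
      rw [← Set.univ_inter {ω | f (Y ω) = c}, hfiber]
      simp only [Set.univ_inter]

theorem IndepValues.of_bijective [IsProbabilityMeasure P] [Fintype α]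
    {S : Ω → α} {V : Ω → β} {Y : Ω → γ} (g : α → β → γ) (hg : ∀ a, Function.Bijective (g a))
    (hY : ∀ ω, Y ω = g (S ω) (V ω)) (hV : ∀ b₁ b₂, P {ω | V ω = b₁} = P {ω | V ω = b₂})
    (hSV : IndepValues P S V) : IndepValues P S Y := by
  let e a := Equiv.ofBijective _ (hg a)
  have hjoint : ∀ a c,
      P {ω | S ω = a ∧ Y ω = c} = P {ω | S ω = a} * P {ω | V ω = (e a).symm c} := by
    intro a c
    rw [← hSV]
    congr 1; ext ω
    simp only [Set.mem_ofPred_eq, hY, (e a).eq_symm_apply]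
    exact ⟨fun ⟨ha, hc⟩ => ⟨ha, ha ▸ hc⟩, fun ⟨ha, hc⟩ => ⟨ha, ha ▸ hc⟩⟩
  intro a c
  have hYc : P {ω | Y ω = c} = P {ω | V ω = (e a).symm c} := by
    rw [measure_eq_sum_measure_inter_fiber P S]
    calc ∑ a', P ({ω | Y ω = c} ∩ {ω | S ω = a'})
        = ∑ a', P {ω | S ω = a'} * P {ω | V ω = (e a).symm c} := by
          refine Finset.sum_congr rfl fun a' _ => ?_
          rw [Set.inter_comm, ← hV ((e a').symm c)]
          exact hjoint a' c
      _ = P {ω | V ω = (e a).symm c} := by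
          rw [← Finset.sum_mul, sum_measure_fiber_eq_one, one_mul]
  rw [hjoint, hYc]

theorem IndepValues.mutualInfo_eq_zero [IsProbabilityMeasure P] [Fintype α] [Fintype β]
    {X : Ω → α} {Y : Ω → β} (h : IndepValues P X Y) : mutualInfo P X Y = 0 := by
  set p := fun a => (P {ω | X ω = a}).toReal
  set q := fun b => (P {ω | Y ω = b}).toReal
  have hjoint : ∀ a b, (P {ω | (X ω, Y ω) = (a, b)}).toReal = p a * q b := by
    intro a b
    simp only [Prod.mk.injEq, h a b, ENNReal.toReal_mul, p, q]
  have hpair : entropy P (fun ω => (X ω, Y ω)) = entropy P X + entropy P Y := by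
    simp only [entropy_eq_sum_negMulLog, Fintype.sum_prod_type, hjoint, Real.negMulLog_mul,
      Finset.sum_add_distrib, ← Finset.sum_mul, ← Finset.mul_sum]
    rw [sum_measure_fiber_toReal_eq_one, sum_measure_fiber_toReal_eq_one]
    ring
  rw [mutualInfo, hpair, sub_self]

end Probability

section Code

variable {F L : Type*} [Field F] [Field L] [Algebra F L] {n k μ : ℕ}

theorem transpose_mulVec_append (G : Matrix (Fin (k + μ)) (Fin n) L) (s : Fin k → L)
    (v : Fin μ → L) :
    Gᵀ *ᵥ Fin.append s v = (G.submatrix (Fin.castAdd μ) id)ᵀ *ᵥ s + (lastRowsOfG G)ᵀ *ᵥ v := by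
  ext j
  simp only [mulVec, dotProduct, Pi.add_apply, transpose_apply, submatrix_apply, id_eq,
    Fin.sum_univ_add, Fin.append_left, Fin.append_right]
  rfl

theorem injective_lastRowsOfG_transpose_mulVec (G : Matrix (Fin (k + μ)) (Fin n) L)
    (hG : Function.Injective (Gᵀ *ᵥ ·)) : Function.Injective ((lastRowsOfG G)ᵀ *ᵥ ·) := by
  intro v w hvw
  have happend : Fin.append (0 : Fin k → L) v = Fin.append 0 w :=
    hG (by simpa only [transpose_mulVec_append, add_right_inj] using hvw)
  funext i
  simpa using congrFun happend (Fin.natAdd k i)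

theorem bijective_map_mul_transpose_mulVec [Module.Finite F L] (C : Matrix (Fin μ) (Fin n) F)
    (hC : C.rank = μ) (H : Matrix (Fin μ) (Fin n) L) (hH : Function.Injective (Hᵀ *ᵥ ·))
    (hMRD : minRankDistEq F {x | ∃ v, x = Hᵀ *ᵥ v} (n - μ + 1)) :
    Function.Bijective ((C.map (algebraMap F L) * Hᵀ) *ᵥ ·) := by
  suffices hinj : Function.Injective ((C.map (algebraMap F L) * Hᵀ) *ᵥ ·) from
    ⟨hinj, mulVec_surjective_iff_isUnit.mpr (mulVec_injective_iff_isUnit.mp hinj)⟩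
  intro v w hvw
  by_contra hne
  have hweight := hMRD.le_rankWeight_sub ⟨v, rfl⟩ ⟨w, rfl⟩ (hH.ne hne)
  have hker : C.map (algebraMap F L) *ᵥ (Hᵀ *ᵥ v - Hᵀ *ᵥ w) = 0 := by
    simpa only [mulVec_sub, mulVec_mulVec, sub_eq_zero] using hvw
  have := rank_add_rankWeight_le_of_map_mulVec_eq_zero C _ hker
  omega

end Code

theorem minRankDistEq.fanOut_inter_eq_empty {F L : Type*} [Field F] [Fintype F] [Field L]
    [Algebra F L] {n m d ρ t : ℕ} (b : Module.Basis (Fin m) F L) {C : Set (Fin n → L)}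
    (hC : minRankDistEq F C d) (hd : 2 * t + ρ < d) {x y : Fin n → L} (hx : x ∈ C) (hy : y ∈ C)
    (hxy : x ≠ y) : fanOut ρ t (toMat b x) ∩ fanOut ρ t (toMat b y) = ∅ :=
  fanOut_inter_eq_empty_of_lt_rank_sub <| by
    rw [← toMat_sub, rank_toMat]
    exact hd.trans_le (hC.le_rankWeight_sub hx hy hxy)

theorem indepValues_map_mulVec_encoding {F L Ω : Type*} [Field F] [Field L] [Fintype L]
    [Algebra F L] [Module.Finite F L] [MeasurableSpace Ω] [Finite Ω] [MeasurableSingletonClass Ω]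
    {P : Measure Ω} [IsProbabilityMeasure P] {n k μ : ℕ} (hμn : μ ≤ n)
    (G : Matrix (Fin (k + μ)) (Fin n) L) (hG₂ : Function.Injective ((lastRowsOfG G)ᵀ *ᵥ ·))
    (hMRD₂ : minRankDistEq F {x | ∃ v, x = (lastRowsOfG G)ᵀ *ᵥ v} (n - μ + 1))
    {S : Ω → Fin k → L} {V : Ω → Fin μ → L} {X : Ω → Fin n → L}
    (hV : ∀ v₁ v₂, P {ω | V ω = v₁} = P {ω | V ω = v₂}) (hSV : IndepValues P S V)
    (hX : ∀ ω, X ω = Gᵀ *ᵥ Fin.append (S ω) (V ω)) (B : Matrix (Fin μ) (Fin n) F) :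
    IndepValues P S (fun ω => B.map (algebraMap F L) *ᵥ X ω) := by
  obtain ⟨C, T, hC, rfl⟩ := B.exists_rank_eq_card_and_eq_mul (by simpa using hμn)
  rw [Fintype.card_fin] at hC
  let CL := C.map (algebraMap F L)
  have hCX : IndepValues P S (fun ω => CL *ᵥ X ω) :=
    IndepValues.of_bijective
      (fun s v => CL *ᵥ ((G.submatrix (Fin.castAdd μ) id)ᵀ *ᵥ s) + (CL * (lastRowsOfG G)ᵀ) *ᵥ v)
      (fun s => (Equiv.addLeft _).bijective.comp
        (bijective_map_mul_transpose_mulVec C hC _ hG₂ hMRD₂))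
      (fun ω => by simp only [hX, transpose_mulVec_append, mulVec_add, mulVec_mulVec]) hV hSV
  simpa [Matrix.map_mul, ← mulVec_mulVec] using hCX.comp_right (T.map (algebraMap F L) *ᵥ ·)

theorem universal_secure_error_correcting_scheme_general
    (m : ℕ)
    (F L : Type) [Field F] [Fintype F]
    [Field L] [Fintype L] [Algebra F L]
    (n k μ t ρ : ℕ) (hsum : k + 2 * t + ρ + μ ≤ n)
    (b : Module.Basis (Fin m) F L)
    (G : Matrix (Fin (k + μ)) (Fin n) L) (hG : G.rank = k + μ)
    (hMRD : minRankDistEq F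
      {x : Fin n → L | ∃ u : Fin (k + μ) → L, x = Gᵀ *ᵥ u} (n - (k + μ) + 1))
    (hMRD2 : minRankDistEq F
      {x : Fin n → L | ∃ v : Fin μ → L, x = (lastRowsOfG G)ᵀ *ᵥ v} (n - μ + 1))
    (Ω : Type) [Fintype Ω] [MeasurableSpace Ω] [MeasurableSingletonClass Ω]
    (P : Measure Ω) [IsProbabilityMeasure P]
    (S : Ω → Fin k → L) (V : Ω → Fin μ → L)
    (hVunif : ∀ v₁ v₂ : Fin μ → L, P {ω | V ω = v₁} = P {ω | V ω = v₂})
    (hindep : ∀ (s : Fin k → L) (v : Fin μ → L),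
      P {ω | S ω = s ∧ V ω = v} = P {ω | S ω = s} * P {ω | V ω = v})
    (X : Ω → Fin n → L)
    (hX : ∀ ω, X ω = Gᵀ *ᵥ Fin.append (S ω) (V ω)) :
    (∀ u₁ u₂ : Fin (k + μ) → L, u₁ ≠ u₂ →
      fanOut ρ t (toMat b (Gᵀ *ᵥ u₁)) ∩ fanOut ρ t (toMat b (Gᵀ *ᵥ u₂)) = ∅) ∧
    (∀ B : Matrix (Fin μ) (Fin n) F,
      mutualInfo P S (fun ω => (B.map (algebraMap F L)) *ᵥ X ω) = 0) := by
  have hGinj : Function.Injective (Gᵀ *ᵥ ·) :=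
    Gᵀ.injective_mulVec_of_rank_eq_card (by rw [rank_transpose, hG, Fintype.card_fin])
  have : Module.Finite F L := Module.Finite.of_basis b
  refine ⟨fun u₁ u₂ hne => ?_, fun B => ?_⟩
  · exact hMRD.fanOut_inter_eq_empty b (by omega) ⟨u₁, rfl⟩ ⟨u₂, rfl⟩ (hGinj.ne hne)
  · exact (indepValues_map_mulVec_encoding (by omega) G
      (injective_lastRowsOfG_transpose_mulVec G hGinj) hMRD2 hVunif hindep hX B).mutualInfo_eq_zero

/-- The universal scheme combining security and error control: if `G` generates an MRD code
of dimension `k + μ`, its last `μ` rows generate an MRD code, `V` is uniform and independent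
of the message `S`, `U = (S;V)` and `X = Gᵀ U`, then (a) the fan-out sets of distinct
codewords are disjoint (the scheme is universally `t`-error-`ρ`-erasure-correcting), and
(b) `I(S;BX) = 0` for every `B ∈ F^{μ×n}` (universal security under `μ` observations). -/
theorem universal_secure_error_correcting_scheme
    (q m : ℕ) (hq : IsPrimePow q)
    (F L : Type) [Field F] [Fintype F] (hF : Fintype.card F = q)
    [Field L] [Fintype L] [Algebra F L] (hm : Module.finrank F L = m)
    (n k μ t ρ : ℕ) (hmn : n ≤ m) (hk : 1 ≤ k) (hsum : k + 2 * t + ρ + μ ≤ n)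
    (b : Module.Basis (Fin m) F L)
    (G : Matrix (Fin (k + μ)) (Fin n) L) (hG : G.rank = k + μ)
    (hMRD : minRankDistEq F
      {x : Fin n → L | ∃ u : Fin (k + μ) → L, x = Gᵀ *ᵥ u} (n - (k + μ) + 1))
    (hMRD2 : minRankDistEq F
      {x : Fin n → L | ∃ v : Fin μ → L, x = (lastRowsOfG G)ᵀ *ᵥ v} (n - μ + 1))
    (Ω : Type) [Fintype Ω] [MeasurableSpace Ω] [MeasurableSingletonClass Ω]
    (P : Measure Ω) [IsProbabilityMeasure P]
    (S : Ω → Fin k → L) (V : Ω → Fin μ → L)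
    (hVunif : ∀ v₁ v₂ : Fin μ → L, P {ω | V ω = v₁} = P {ω | V ω = v₂})
    (hindep : ∀ (s : Fin k → L) (v : Fin μ → L),
      P {ω | S ω = s ∧ V ω = v} = P {ω | S ω = s} * P {ω | V ω = v})
    (X : Ω → Fin n → L)
    (hX : ∀ ω, X ω = Gᵀ *ᵥ Fin.append (S ω) (V ω)) :
    (∀ u₁ u₂ : Fin (k + μ) → L, u₁ ≠ u₂ →
      fanOut ρ t (toMat b (Gᵀ *ᵥ u₁)) ∩ fanOut ρ t (toMat b (Gᵀ *ᵥ u₂)) = ∅) ∧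
    (∀ B : Matrix (Fin μ) (Fin n) F,
      mutualInfo P S (fun ω => (B.map (algebraMap F L)) *ᵥ X ω) = 0) :=
  universal_secure_error_correcting_scheme_general m F L n k μ t ρ hsum b G hG hMRD hMRD2 Ω P S V
    hVunif hindep X hX
end

section
/- Let q be a prime power, n and m positive integers, and t, ρ, μ nonnegative integers with μ ≤ n − 2t − ρ. Let S be a random variable with values in a finite set 𝒮 and let X be a jointly distributed random variable with values in Fq^{n×m}. For each s with P(S = s) > 0, let X_s = {x ∈ Fq^{n×m} : P(S = s, X = x) > 0} and Y^{ρ,t}_{(s)} = ⋃_{x ∈ X_s} Y^{ρ,t}_x. Assume: (i) the sets Y^{ρ,t}_{(s)}, over s in the support of S, are pairwise disjoint (the encoder is universally t-error-ρ-erasure-correcting); and (ii) I(S; BX) = 0 for every matrix B ∈ Fq^{μ×n} (universal security under μ observations). Then H(S) ≤ (n − 2t − ρ − μ)·m·log q. -/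
set_option autoImplicit false

open Matrix MeasureTheory

/-! Observing the first `μ` rows `W = B X` of the codeword reveals nothing, so
`H(S) = H(S, W) - H(W)`, which is at most `log K` once every `w` is compatible with at most `K`
messages. Two messages compatible with `w` have codewords agreeing on those `μ` rows; if they
also agreed on `n - 2t - ρ - μ` further rows they would differ in at most `2t + ρ` rows, and
erasing `ρ` of them and charging `t` each as errors to the two codewords gives a common channel
output, against disjointness. Hence `K = q ^ ((n - 2t - ρ - μ) m)` works. -/

open Finset Real

namespace Real

lemma sum_negMulLog_le {ι : Type*} (T : Finset ι) {v : ι → ℝ} (hv : ∀ i ∈ T, 0 ≤ v i) :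
    ∑ i ∈ T, negMulLog (v i) ≤ negMulLog (∑ i ∈ T, v i) + (∑ i ∈ T, v i) * log #T := by
  rcases T.eq_empty_or_nonempty with rfl | hT
  · simp
  have hc : (0 : ℝ) < #T := by exact_mod_cast hT.card_pos
  have hjensen := concaveOn_negMulLog.le_map_sum (t := T) (w := fun _ => (#T : ℝ)⁻¹) (p := v)
    (fun _ _ => by positivity) (by simp [hc.ne']) hv
  simp only [smul_eq_mul, ← mul_sum] at hjensen
  rw [negMulLog_mul, negMulLog, log_inv] at hjensen
  have := mul_le_mul_of_nonneg_left hjensen hc.le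
  field_simp at this
  linarith

lemma sum_negMulLog_le_of_card_pos_le {ι : Type*} [Fintype ι] {v : ι → ℝ} (hv : ∀ i, 0 ≤ v i)
    {K : ℕ} (hK : #{i | 0 < v i} ≤ K) :
    ∑ i, negMulLog (v i) ≤ negMulLog (∑ i, v i) + (∑ i, v i) * log K := by
  set T : Finset ι := {i | 0 < v i}
  have hsum : ∑ i, v i = ∑ i ∈ T, v i :=
    (sum_filter_of_ne fun i _ hi => (hv i).lt_of_ne' hi).symm
  have hsum' : ∑ i, negMulLog (v i) = ∑ i ∈ T, negMulLog (v i) :=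
    (sum_filter_of_ne fun i _ hi => (hv i).lt_of_ne' fun h => hi (by rw [h, negMulLog_zero])).symm
  rw [hsum, hsum']
  refine (sum_negMulLog_le T fun i _ => hv i).trans ((add_le_add_iff_left _).2 ?_)
  rcases T.eq_empty_or_nonempty with hT | hT
  · simp [hT]
  exact mul_le_mul_of_nonneg_left
    (log_le_log (by exact_mod_cast hT.card_pos) (by exact_mod_cast hK)) (sum_nonneg fun i _ => hv i)

end Real

section Entropy

variable {Ω α β : Type*} [MeasurableSpace Ω] {P : Measure Ω}

lemma entropy_eq_sum_negMulLog_s13 [Fintype α] (X : Ω → α) :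
    entropy P X = ∑ a, negMulLog (P.real {ω | X ω = a}) := by
  simp only [entropy, negMulLog, measureReal_def, neg_mul, sum_neg_distrib]

lemma exists_measure_pos_of_measure_comp_pos {γ : Type*} [Countable γ] {S : Ω → α} {X : Ω → γ}
    {f : γ → β} {s : α} {w : β} (h : 0 < P {ω | S ω = s ∧ f (X ω) = w}) :
    ∃ x, f x = w ∧ 0 < P {ω | S ω = s ∧ X ω = x} := by
  by_contra! hnull
  refine h.ne' (measure_mono_null (t := ⋃ x ∈ {x | f x = w}, {ω | S ω = s ∧ X ω = x}) ?_ ?_)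
  · intro ω hω
    simp only [Set.mem_iUnion]
    exact ⟨X ω, hω.2, hω.1, rfl⟩
  · exact (measure_biUnion_null_iff (Set.to_countable _)).2 fun x hx =>
      nonpos_iff_eq_zero.1 (hnull x hx)

variable [DiscreteMeasurableSpace Ω] [IsProbabilityMeasure P]

lemma measureReal_eq_sum_measureReal_pair [Fintype α] (S : Ω → α) (Y : Ω → β) (w : β) :
    P.real {ω | Y ω = w} = ∑ s, P.real {ω | (S ω, Y ω) = (s, w)} := by
  have hunion : {ω | Y ω = w} = ⋃ s ∈ (univ : Finset α), {ω | (S ω, Y ω) = (s, w)} := by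
    ext ω; simp
  rw [hunion, measureReal_biUnion_finset _ fun _ _ => .of_discrete]
  intro s _ s' _ hss'
  exact Set.disjoint_left.2 fun ω h h' => hss' (by simp_all)

lemma sum_measureReal_fiber_eq_one [Fintype β] (Y : Ω → β) :
    ∑ w, P.real {ω | Y ω = w} = 1 := by
  rw [← probReal_univ (μ := P), ← Set.preimage_univ (f := Y), ← coe_univ]
  exact sum_measureReal_preimage_singleton _ fun _ _ => .of_discrete

lemma entropy_pair_sub_entropy_snd_le_log [Fintype α] [Fintype β] (S : Ω → α) (Y : Ω → β)
    {K : ℕ} (hK : ∀ w, #{s | 0 < P {ω | S ω = s ∧ Y ω = w}} ≤ K) :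
    entropy P (fun ω => (S ω, Y ω)) - entropy P Y ≤ log K := by
  set p : α → β → ℝ := fun s w => P.real {ω | (S ω, Y ω) = (s, w)}
  have hfiber : ∀ w, ∑ s, negMulLog (p s w) - negMulLog (P.real {ω | Y ω = w})
      ≤ P.real {ω | Y ω = w} * log K := by
    intro w
    rw [measureReal_eq_sum_measureReal_pair S]
    refine sub_le_iff_le_add'.2 (sum_negMulLog_le_of_card_pos_le (fun s => measureReal_nonneg) ?_)
    refine le_trans (card_le_card fun s hs => ?_) (hK w)
    simp only [mem_filter, mem_univ, true_and, Prod.mk.injEq, measureReal_def] at hs ⊢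
    exact (ENNReal.toReal_pos_iff.1 hs).1
  calc entropy P (fun ω => (S ω, Y ω)) - entropy P Y
      = ∑ w, (∑ s, negMulLog (p s w) - negMulLog (P.real {ω | Y ω = w})) := by
        rw [entropy_eq_sum_negMulLog_s13, entropy_eq_sum_negMulLog_s13, Fintype.sum_prod_type_right,
          ← sum_sub_distrib]
    _ ≤ ∑ w, P.real {ω | Y ω = w} * log K := sum_le_sum fun w _ => hfiber w
    _ = log K := by rw [← sum_mul, sum_measureReal_fiber_eq_one, one_mul]

theorem entropy_le_log_of_mutualInfo_eq_zero [Fintype α] [Fintype β] {S : Ω → α} {Y : Ω → β}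
    (hI : mutualInfo P S Y = 0) {K : ℕ}
    (hK : ∀ w, #{s | 0 < P {ω | S ω = s ∧ Y ω = w}} ≤ K) :
    entropy P S ≤ log K := by
  have := entropy_pair_sub_entropy_snd_le_log S Y hK
  rw [mutualInfo] at hI
  linarith

end Entropy

lemma Finset.exists_subset_card_le_card_sdiff_le {α : Type*} [DecidableEq α] (D : Finset α)
    {a b : ℕ} (h : #D ≤ a + b) : ∃ E ⊆ D, #E ≤ a ∧ #(D \ E) ≤ b := by
  obtain ⟨E, hED, hE⟩ := exists_subset_card_eq (min_le_right a #D)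
  exact ⟨E, hED, by omega, by rw [card_sdiff_of_subset hED]; omega⟩

namespace Matrix

variable {ι F : Type*} [Fintype ι] [DecidableEq ι] [Field F]

def rowSelect (T : Finset ι) : Matrix ι ι F := diagonal fun i => if i ∈ T then 1 else 0

lemma rowSelect_mul_apply {κ : Type*} (T : Finset ι) (M : Matrix ι κ F) (i : ι) (j : κ) :
    ((rowSelect T : Matrix ι ι F) * M) i j = if i ∈ T then M i j else 0 := by
  rw [rowSelect, diagonal_mul]
  split_ifs <;> simp

lemma rank_rowSelect (T : Finset ι) : (rowSelect T : Matrix ι ι F).rank = #T := by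
  classical
  rw [rowSelect, rank_diagonal, Fintype.card_subtype]
  congr 1
  ext i
  simp

lemma rank_rowSelect_mul_le {κ : Type*} [Fintype κ] (T : Finset ι) (M : Matrix ι κ F) :
    (rowSelect T * M).rank ≤ #T :=
  (rank_mul_le_left _ _).trans (rank_rowSelect T).le

end Matrix

section FanOut

variable {F : Type*} [Field F] [Fintype F] [DecidableEq F] {n m : ℕ} {ρ t : ℕ}

open Matrix

theorem fanOut_inter_nonempty {x₁ x₂ : Matrix (Fin n) (Fin m) F}
    (h : #{i | x₁.row i ≠ x₂.row i} ≤ ρ + t + t) : (fanOut ρ t x₁ ∩ fanOut ρ t x₂).Nonempty := by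
  set D : Finset (Fin n) := {i | x₁.row i ≠ x₂.row i}
  obtain ⟨E, hED, hE, hDE⟩ := D.exists_subset_card_le_card_sdiff_le (add_assoc ρ t t ▸ h)
  obtain ⟨T₁, hT₁, hT₁t, hT₂t⟩ := (D \ E).exists_subset_card_le_card_sdiff_le hDE
  set T₂ := (D \ E) \ T₁
  -- Erase the rows in `E`; the rows in `T₁` become errors on `x₁`, those in `T₂` errors on `x₂`.
  set A : Matrix (Fin n) (Fin n) F := rowSelect Eᶜ
  have hA : n - ρ ≤ A.rank := by
    rw [rank_rowSelect, card_compl, Fintype.card_fin]; omega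
  set Z₁ : Matrix (Fin n) (Fin m) F := (rowSelect T₁ : Matrix (Fin n) (Fin n) F) * (x₂ - x₁)
  set Z₂ : Matrix (Fin n) (Fin m) F := (rowSelect T₂ : Matrix (Fin n) (Fin n) F) * (x₁ - x₂)
  have hy : A * x₁ + Z₁ = A * x₂ + Z₂ := by
    ext i j
    have hrow : i ∉ D → x₁ i j = x₂ i j := fun hi =>
      congr_fun (show x₁.row i = x₂.row i by simpa [D] using hi) j
    have hT₁DE := @hT₁ i
    have hEi := @hED i
    simp only [A, Z₁, Z₂, Matrix.add_apply, rowSelect_mul_apply, Matrix.sub_apply, mem_compl, T₂,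
      mem_sdiff] at hT₁DE ⊢
    split_ifs <;> grind
  exact ⟨(A, A * x₁ + Z₁),
    ⟨hA, _, (rank_rowSelect_mul_le _ _).trans hT₁t, rfl⟩,
    ⟨hA, _, (rank_rowSelect_mul_le _ _).trans hT₂t, hy⟩⟩

theorem card_le_of_pairwiseDisjoint_fanOut {σ : Type*} {T : Finset σ}
    {x : σ → Matrix (Fin n) (Fin m) F} (hdisj : (T : Set σ).PairwiseDisjoint (fanOut ρ t ∘ x))
    (R : Finset (Fin n)) (hR : ∀ s ∈ T, ∀ s' ∈ T, ∀ i ∈ R, x s i = x s' i) :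
    #T ≤ Fintype.card F ^ ((n - #R - (ρ + t + t)) * m) := by
  obtain ⟨R', hR'R, hR'⟩ := exists_subset_card_eq (s := Rᶜ) (n := n - #R - (ρ + t + t))
    (by rw [card_compl, Fintype.card_fin]; omega)
  have hinj : Set.InjOn (fun s (i : R') => x s i) T := by
    intro s hs s' hs' hss'
    by_contra hne
    refine Set.not_disjoint_iff_nonempty_inter.2 (fanOut_inter_nonempty ?_) (hdisj hs hs' hne)
    have hsub : ({i | (x s).row i ≠ (x s').row i} : Finset (Fin n)) ⊆ (R ∪ R')ᶜ := by
      intro i hi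
      simp only [mem_filter, mem_univ, true_and] at hi
      simp only [mem_compl, mem_union, not_or]
      exact ⟨fun hiR => hi (hR s hs s' hs' i hiR), fun hiR' => hi (congr_fun hss' ⟨i, hiR'⟩)⟩
    refine (card_le_card hsub).trans ?_
    rw [card_compl, Fintype.card_fin,
      card_union_of_disjoint (disjoint_of_subset_right hR'R disjoint_compl_right)]
    omega
  calc #T ≤ Fintype.card (R' → Fin m → F) :=
        card_le_card_of_injOn _ (fun _ _ => mem_coe.2 (mem_univ _)) hinj
    _ = Fintype.card F ^ ((n - #R - (ρ + t + t)) * m) := by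
        simp only [Fintype.card_fun, Fintype.card_coe, Fintype.card_fin, hR', ← pow_mul, mul_comm]

theorem card_compatible_messages_le {𝒮 Ω : Type*} [Fintype 𝒮] [MeasurableSpace Ω]
    {P : Measure Ω} {S : Ω → 𝒮} {X : Ω → Matrix (Fin n) (Fin m) F}
    (hdisj : ∀ s₁ s₂ : 𝒮, s₁ ≠ s₂ →
      (⋃ x ∈ {x | 0 < P {ω | S ω = s₁ ∧ X ω = x}}, fanOut ρ t x) ∩
        (⋃ x ∈ {x | 0 < P {ω | S ω = s₂ ∧ X ω = x}}, fanOut ρ t x) = ∅)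
    {μ : ℕ} (hμn : μ ≤ n) (w : Matrix (Fin μ) (Fin m) F) :
    #{s | 0 < P {ω | S ω = s ∧ (X ω).submatrix (Fin.castLE hμn) id = w}} ≤
      Fintype.card F ^ ((n - μ - (ρ + t + t)) * m) := by
  set T : Finset 𝒮 := {s | 0 < P {ω | S ω = s ∧ (X ω).submatrix (Fin.castLE hμn) id = w}}
  choose! x hxw hxpos using fun s (hs : s ∈ T) =>
    exists_measure_pos_of_measure_comp_pos (X := X) (f := (·.submatrix (Fin.castLE hμn) id))
      (mem_filter.1 hs).2
  refine (card_le_of_pairwiseDisjoint_fanOut (ρ := ρ) (t := t) (x := x) (fun s hs s' hs' hne => ?_)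
    (univ.map (Fin.castLEEmb hμn)) ?_).trans_eq (by simp)
  · exact (Set.disjoint_iff_inter_eq_empty.2 (hdisj s s' hne)).mono
      (Set.subset_biUnion_of_mem (u := fanOut ρ t) (hxpos s hs))
      (Set.subset_biUnion_of_mem (u := fanOut ρ t) (hxpos s' hs'))
  · intro s hs s' hs' i hi
    obtain ⟨a, -, rfl⟩ := mem_map.1 hi
    exact congr_fun ((hxw s hs).trans (hxw s' hs').symm) a

end FanOut

theorem rate_converse_secure_error_correcting_general
    (q : ℕ) (n m : ℕ)
    (t ρ μ : ℕ) (hpar : μ + 2 * t + ρ ≤ n)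
    (F : Type) [Field F] [Fintype F] (hF : Fintype.card F = q)
    (𝒮 : Type) [Fintype 𝒮]
    (Ω : Type) [Fintype Ω] [MeasurableSpace Ω] [MeasurableSingletonClass Ω]
    (P : Measure Ω) [IsProbabilityMeasure P]
    (S : Ω → 𝒮) (X : Ω → Matrix (Fin n) (Fin m) F)
    (hdisj : ∀ s₁ s₂ : 𝒮, s₁ ≠ s₂ →
      (⋃ x ∈ {x | 0 < P {ω | S ω = s₁ ∧ X ω = x}}, fanOut ρ t x) ∩
        (⋃ x ∈ {x | 0 < P {ω | S ω = s₂ ∧ X ω = x}}, fanOut ρ t x) = ∅)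
    (hsec : ∀ B : Matrix (Fin μ) (Fin n) F,
      mutualInfo P S (fun ω => B * X ω) = 0) :
    entropy P S ≤ ((n : ℝ) - 2 * t - ρ - μ) * (m * Real.log q) := by
  classical
  have hμn : μ ≤ n := by omega
  set B : Matrix (Fin μ) (Fin n) F := (1 : Matrix (Fin n) (Fin n) F).submatrix (Fin.castLE hμn) id
  have hB : ∀ x : Matrix (Fin n) (Fin m) F, B * x = x.submatrix (Fin.castLE hμn) id :=
    one_submatrix_mul _ (Equiv.refl _)
  have hI : mutualInfo P S (fun ω => (X ω).submatrix (Fin.castLE hμn) id) = 0 := by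
    simpa only [hB] using hsec B
  have hk : ((n - μ - (ρ + t + t) : ℕ) : ℝ) = n - 2 * t - ρ - μ := by
    rw [Nat.cast_sub (by omega), Nat.cast_sub hμn]; push_cast; ring
  calc entropy P S ≤ Real.log (q ^ ((n - μ - (ρ + t + t)) * m) : ℕ) :=
        entropy_le_log_of_mutualInfo_eq_zero hI fun w =>
          hF ▸ card_compatible_messages_le hdisj hμn w
    _ = ((n : ℝ) - 2 * t - ρ - μ) * (m * Real.log q) := by
        rw [Nat.cast_pow, Real.log_pow, Nat.cast_mul, hk]; ring

/-- Rate converse: if the scheme is universally `t`-error-`ρ`-erasure-correcting (pairwise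
disjoint fan-out sets `Y^{ρ,t}_{(s)}`) and universally secure under `μ` observations, then
the message entropy satisfies `H(S) ≤ (n - 2t - ρ - μ)·m·log q`. -/
theorem rate_converse_secure_error_correcting
    (q : ℕ) (hq : IsPrimePow q) (n m : ℕ) (hn : 0 < n) (hm : 0 < m)
    (t ρ μ : ℕ) (hpar : μ + 2 * t + ρ ≤ n)
    (F : Type) [Field F] [Fintype F] (hF : Fintype.card F = q)
    (𝒮 : Type) [Fintype 𝒮]
    (Ω : Type) [Fintype Ω] [MeasurableSpace Ω] [MeasurableSingletonClass Ω]
    (P : Measure Ω) [IsProbabilityMeasure P]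
    (S : Ω → 𝒮) (X : Ω → Matrix (Fin n) (Fin m) F)
    (hdisj : ∀ s₁ s₂ : 𝒮, s₁ ≠ s₂ →
      (⋃ x ∈ {x | 0 < P {ω | S ω = s₁ ∧ X ω = x}}, fanOut ρ t x) ∩
        (⋃ x ∈ {x | 0 < P {ω | S ω = s₂ ∧ X ω = x}}, fanOut ρ t x) = ∅)
    (hsec : ∀ B : Matrix (Fin μ) (Fin n) F,
      mutualInfo P S (fun ω => B * X ω) = 0) :
    entropy P S ≤ ((n : ℝ) - 2 * t - ρ - μ) * (m * Real.log q) :=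
  rate_converse_secure_error_correcting_general q n m t ρ μ hpar F hF 𝒮 Ω P S X hdisj hsec
end

section
/- Let q be a prime power, n and m positive integers, and d an integer with 1 ≤ d ≤ min(n, m). If C ⊆ Fq^{n×m} is a set of matrices such that rank(x − y) ≥ d for all distinct x, y ∈ C, then |C| ≤ q^{max(n,m)·(min(n,m) − d + 1)} (the Singleton bound for the rank metric). -/
set_option autoImplicit false

open Matrix Module

/-! Puncturing a code of minimum rank distance `d ≤ n` in `F^{n×m}` at `d - 1` rows is injective:
two codewords agreeing on the remaining `n - d + 1` rows differ by a matrix with at most `d - 1`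
nonzero rows, whose rank is below `d`. Hence the code has at most `q^{m(n-d+1)}` elements; for
`m < n` apply this to the transposed code. -/

namespace Matrix

variable {ι κ F : Type*} [Fintype ι] [Fintype κ] [Field F]

theorem rank_le_card_of_row_eq_zero (A : Matrix ι κ F) (s : Finset ι)
    (hA : ∀ i ∉ s, A i = 0) : A.rank ≤ s.card := by
  have hspan : Submodule.span F (Set.range A.row) ≤
      Submodule.span F (Set.range fun i : s => A.row i) := by
    refine Submodule.span_le.2 ?_
    rintro _ ⟨i, rfl⟩
    by_cases hi : i ∈ s
    · exact Submodule.subset_span ⟨⟨i, hi⟩, rfl⟩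
    · simp [row, hA i hi]
  calc A.rank = finrank F (Submodule.span F (Set.range A.row)) := A.rank_eq_finrank_span_row
    _ ≤ (Set.range fun i : s => A.row i).finrank F := Submodule.finrank_mono hspan
    _ ≤ Fintype.card s := finrank_range_le_card _
    _ = s.card := Fintype.card_coe s

def HasMinRankDist (C : Set (Matrix ι κ F)) (d : ℕ) : Prop :=
  ∀ x ∈ C, ∀ y ∈ C, x ≠ y → d ≤ (x - y).rank

theorem HasMinRankDist.image_transpose {C : Set (Matrix ι κ F)} {d : ℕ}
    (hC : HasMinRankDist C d) : HasMinRankDist (transpose '' C) d := by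
  rintro _ ⟨x, hx, rfl⟩ _ ⟨y, hy, rfl⟩ hne
  rw [← transpose_sub, rank_transpose]
  exact hC x hx y hy (ne_of_apply_ne _ hne)

theorem HasMinRankDist.injOn_restrict_rows [DecidableEq ι] {C : Set (Matrix ι κ F)} {d : ℕ}
    (hC : HasMinRankDist C d) {t : Finset ι} (ht : tᶜ.card < d) :
    Set.InjOn (fun (A : Matrix ι κ F) (i : t) => A i) C := by
  intro x hx y hy hxy
  by_contra hne
  have hrows : ∀ i ∉ tᶜ, (x - y) i = 0 := fun i hi => by
    rw [Finset.notMem_compl] at hi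
    exact sub_eq_zero.2 (congrFun hxy ⟨i, hi⟩)
  have hle := rank_le_card_of_row_eq_zero (x - y) tᶜ hrows
  have hge := hC x hx y hy hne
  omega

theorem HasMinRankDist.ncard_le_of_le_card_rows [Fintype F] {C : Set (Matrix ι κ F)} {d : ℕ}
    (hC : HasMinRankDist C d) (hd1 : 1 ≤ d) (hd : d ≤ Fintype.card ι) :
    C.ncard ≤ Fintype.card F ^ (Fintype.card κ * (Fintype.card ι - d + 1)) := by
  classical
  obtain ⟨t, -, ht⟩ := (Finset.univ : Finset ι).exists_subset_card_eq
    (n := Fintype.card ι - d + 1) (by rw [Finset.card_univ]; omega)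
  have htc : tᶜ.card < d := by rw [Finset.card_compl]; omega
  calc C.ncard ≤ Nat.card (Matrix t κ F) :=
        Set.ncard_le_ncard_of_injOn _ (fun _ _ => Set.mem_univ _) (hC.injOn_restrict_rows htc)
          Set.finite_univ |>.trans_eq (Set.ncard_univ _)
    _ = Fintype.card F ^ (Fintype.card κ * (Fintype.card ι - d + 1)) := by
        simp [Matrix, pow_mul, ht]

theorem HasMinRankDist.ncard_le_of_le_card_cols [Fintype F] {C : Set (Matrix ι κ F)} {d : ℕ}
    (hC : HasMinRankDist C d) (hd1 : 1 ≤ d) (hd : d ≤ Fintype.card κ) :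
    C.ncard ≤ Fintype.card F ^ (Fintype.card ι * (Fintype.card κ - d + 1)) := by
  rw [← Set.ncard_image_of_injective C transpose_injective]
  exact hC.image_transpose.ncard_le_of_le_card_rows hd1 hd

end Matrix

theorem singleton_bound_rank_metric_general
    (q : ℕ) (n m : ℕ)
    (d : ℕ) (hd1 : 1 ≤ d) (hd2 : d ≤ min n m)
    (F : Type) [Field F] [Fintype F] (hF : Fintype.card F = q)
    (C : Set (Matrix (Fin n) (Fin m) F))
    (hC : ∀ x ∈ C, ∀ y ∈ C, x ≠ y → d ≤ (x - y).rank) :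
    C.ncard ≤ q ^ (max n m * (min n m - d + 1)) := by
  have hCode : HasMinRankDist C d := hC
  subst hF
  rcases le_total n m with hnm | hmn
  · rw [max_eq_right hnm, min_eq_left hnm]
    simpa using hCode.ncard_le_of_le_card_rows hd1 (by simp; omega)
  · rw [max_eq_left hmn, min_eq_right hmn]
    simpa using hCode.ncard_le_of_le_card_cols hd1 (by simp; omega)

/-- The Singleton bound for the rank metric: a code `C ⊆ F^{n×m}` in which all pairs of
distinct matrices are at rank distance at least `d` has at most
`q^{max(n,m)·(min(n,m) - d + 1)}` codewords. -/
theorem singleton_bound_rank_metric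
    (q : ℕ) (hq : IsPrimePow q) (n m : ℕ) (hn : 0 < n) (hm : 0 < m)
    (d : ℕ) (hd1 : 1 ≤ d) (hd2 : d ≤ min n m)
    (F : Type) [Field F] [Fintype F] (hF : Fintype.card F = q)
    (C : Set (Matrix (Fin n) (Fin m) F))
    (hC : ∀ x ∈ C, ∀ y ∈ C, x ≠ y → d ≤ (x - y).rank) :
    C.ncard ≤ q ^ (max n m * (min n m - d + 1)) :=
  singleton_bound_rank_metric_general q n m d hd1 hd2 F hF C hC
end
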